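/- arXiv:2307.03004 — 4 statements merged into one kernel-verified Lean document; each statement's English description precedes it below -/
import Mathlib

section
/- Suppose the finite-horizon value functions J_N : X → ℝ≥0 satisfy J_N(x) ≤ γ·ℓ_min(x) for all x ∈ X and all horizons N ≥ 1, where γ ≥ 1, and the principle of optimality holds in the form J_N(x) = ℓ(x, u₀*) + J_{N-1}(f(x, u₀*)) along optimal trajectories, with ℓ(x,u) ≥ ℓ_min(x) for all u. Then along an optimal open-loop trajectory x_k (k = 0,...,N) for horizon N starting at x, the tail costs decay exponentially: J_{N-k}(x_k) ≤ ((γ-1)/γ)^k · J_N(x) for all k ∈ {0,...,N-1}. -/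
/-! Subtracting the Bellman stage cost `ℓ(x_k, u_k) ≥ ℓ_min(x_k) ≥ J_{N-k}(x_k)/γ` from
`J_{N-k}(x_k)` leaves at most the fraction `(γ - 1)/γ` of it for `J_{N-k-1}(x_{k+1})`; iterating
this contraction along the trajectory (`le_geom`) gives the geometric decay. -/

/-- One step of the decay: with `a = J_{M}(y)`, `c` the stage cost, `b = J_{M-1}(y⁺)` and
`m = ℓ_min(y)`. -/
lemma tail_le_of_cost_controllable_step {a b c m γ : ℝ} (hγ : 0 < γ) (hbellman : a = c + b)
    (hstage : m ≤ c) (hcc : a ≤ γ * m) : b ≤ (γ - 1) / γ * a := by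
  have hdiv : a / γ ≤ m := (div_le_iff₀' hγ).2 hcc
  calc b = a - c := by linarith
    _ ≤ a - a / γ := by linarith
    _ = (γ - 1) / γ * a := by field_simp

theorem stmt2_general {X U : Type*}
    (J : ℕ → X → ℝ) (ℓ : X → U → ℝ) (lmin : X → ℝ) (γ : ℝ)
    (N : ℕ) (x : ℕ → X) (u : ℕ → U)
    (hγ : 1 ≤ γ)
    (hcc : ∀ (M : ℕ) (y : X), 1 ≤ M → J M y ≤ γ * lmin y)
    (hlmin : ∀ (y : X) (u' : U), lmin y ≤ ℓ y u')
    (hbellman : ∀ k, k < N → J (N - k) (x k) = ℓ (x k) (u k) + J (N - k - 1) (x (k+1))) :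
    ∀ k, k < N → J (N - k) (x k) ≤ ((γ - 1)/γ)^k * J N (x 0) := by
  intro k hk
  have hγ0 : 0 < γ := by linarith
  have hstep : ∀ j < k, J (N - (j + 1)) (x (j + 1)) ≤ (γ - 1) / γ * J (N - j) (x j) := by
    intro j hj
    rw [← Nat.sub_sub]
    exact tail_le_of_cost_controllable_step hγ0 (hbellman j (by omega)) (hlmin _ _)
      (hcc _ _ (by omega))
  simpa using le_geom (u := fun j ↦ J (N - j) (x j)) (div_nonneg (by linarith) hγ0.le) k hstep

/-- Cost controllability + principle of optimality ⇒ exponential decay of tail costs. -/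
theorem stmt2 {X U : Type*}
    (J : ℕ → X → ℝ) (ℓ : X → U → ℝ) (lmin : X → ℝ) (γ : ℝ)
    (N : ℕ) (x : ℕ → X) (u : ℕ → U)
    (hγ : 1 ≤ γ)
    (hJnn : ∀ M y, 0 ≤ J M y)
    (hcc : ∀ (M : ℕ) (y : X), 1 ≤ M → J M y ≤ γ * lmin y)
    (hlmin : ∀ (y : X) (u' : U), lmin y ≤ ℓ y u')
    (hbellman : ∀ k, k < N → J (N - k) (x k) = ℓ (x k) (u k) + J (N - k - 1) (x (k+1))) :
    ∀ k, k < N → J (N - k) (x k) ≤ ((γ - 1)/γ)^k * J N (x 0) :=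
  stmt2_general J ℓ lmin γ N x u hγ hcc hlmin hbellman
end

section
/- Let (x_r(t), u_r(t)) be a T-periodic reference, ℓ_e a stage cost, and V_fe a terminal cost satisfying the one-step decrease V_fe(f(x, k_f(x,t)), t+1) - V_fe(x,t) ≤ -ℓ_e(x, k_f(x,t), t) + ℓ_e(x_r(t), u_r(t), t) for all t and x ∈ X_f(t). Define the shifted terminal cost Ṽ_fe(x,t) := V_fe(x,t) + ∑_{k=0}^{T-2} ((T-1-k)/T)·ℓ_e(x_r(t+k), u_r(t+k), t+k). Then Ṽ_fe satisfies Ṽ_fe(f(x,k_f(x,t)), t+1) - Ṽ_fe(x,t) + ℓ_e(x, k_f(x,t), t) ≤ (1/T)∑_{k=0}^{T-1} ℓ_e(x_r(k), u_r(k), k), i.e., the decrease is with respect to the average cost over one period. -/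
/-!
Write `ℓ_r t = ℓ_e (x_r t) (u_r t) t` and `S t = ∑_{k < T-1} (T-1-k)/T · ℓ_r (t+k)`, so that
`Ṽ_fe = V_fe + S`. Then `S (t+1) + ℓ_r t - S t = (1/T) ∑_{k < T} ℓ_r (t+k)`, because shifting
the ramp weights `(T-k)/T` by one index turns them into `(T-1-k)/T`, and the two differ by
exactly `1/T`. By periodicity the window `[t, t+T)` can be replaced by `[0, T)`, and adding
the one-step decrease of `V_fe` gives the claim.
-/

open Finset Function

theorem Function.Periodic.sum_range_add {M : Type*} [AddCommMonoid M] {L : ℕ → M} {T : ℕ}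
    (hL : Periodic L T) (t : ℕ) : ∑ k ∈ range T, L (t + k) = ∑ k ∈ range T, L k := by
  induction t with
  | zero => simp
  | succ t ih =>
    rw [← ih]
    cases T with
    | zero => simp
    | succ n =>
      rw [sum_range_succ, sum_range_succ', add_right_comm t 1 n, add_assoc t n 1, hL t, add_zero]
      simp only [add_assoc, add_comm 1]

theorem sum_ramp_weights_shift_add_sub_eq_average {K : Type*} [Field K] [CharZero K] (L : ℕ → K)
    {T : ℕ} (hT : T ≠ 0) (t : ℕ) :
    ∑ k ∈ range (T - 1), ((T : K) - 1 - k) / T * L (t + 1 + k) + L t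
      - ∑ k ∈ range (T - 1), ((T : K) - 1 - k) / T * L (t + k)
      = 1 / T * ∑ k ∈ range T, L (t + k) := by
  obtain ⟨n, rfl⟩ := Nat.exists_eq_succ_of_ne_zero hT
  have hn : (n : K) + 1 ≠ 0 := Nat.cast_add_one_ne_zero n
  simp only [Nat.succ_sub_one, Nat.cast_succ, add_sub_cancel_right]
  have h_shift : ∑ k ∈ range (n + 1), ((n : K) + 1 - k) / (n + 1) * L (t + k)
      = ∑ k ∈ range n, ((n : K) - k) / (n + 1) * L (t + 1 + k) + L t := by
    rw [sum_range_succ']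
    simp only [Nat.cast_add, Nat.cast_one, add_sub_add_right_eq_sub, CharP.cast_eq_zero, sub_zero,
      div_self hn, add_zero, one_mul, add_assoc, add_comm 1]
  have h_last : ∑ k ∈ range (n + 1), ((n : K) - k) / (n + 1) * L (t + k)
      = ∑ k ∈ range n, ((n : K) - k) / (n + 1) * L (t + k) := by
    simp only [sum_range_succ, sub_self, zero_div, zero_mul, add_zero]
  rw [← h_shift, ← h_last, ← sum_sub_distrib, mul_sum]
  refine sum_congr rfl fun k _ => ?_
  field_simp
  ring

/-- Shifted terminal cost achieves a decrease w.r.t. the average cost over one period. -/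
theorem stmt4 {X U : Type*}
    (T : ℕ) (hT : 1 ≤ T)
    (f : X → U → X)
    (ℓe : X → U → ℕ → ℝ)
    (Vfe : X → ℕ → ℝ)
    (kf : X → ℕ → U)
    (Xf : ℕ → Set X)
    (xr : ℕ → X) (ur : ℕ → U)
    (hper : ∀ t, ℓe (xr (t+T)) (ur (t+T)) (t+T) = ℓe (xr t) (ur t) t)
    (hdec : ∀ t, ∀ x ∈ Xf t,
      Vfe (f x (kf x t)) (t+1) - Vfe x t ≤ - ℓe x (kf x t) t + ℓe (xr t) (ur t) t)
    (Vtil : X → ℕ → ℝ)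
    (hVtil : ∀ x t, Vtil x t = Vfe x t +
      ∑ k ∈ Finset.range (T-1), (((T:ℝ) - 1 - k)/T) * ℓe (xr (t+k)) (ur (t+k)) (t+k)) :
    ∀ t, ∀ x ∈ Xf t,
      Vtil (f x (kf x t)) (t+1) - Vtil x t + ℓe x (kf x t) t
        ≤ (1/(T:ℝ)) * ∑ k ∈ Finset.range T, ℓe (xr k) (ur k) k := by
  intro t x hx
  have h_avg := sum_ramp_weights_shift_add_sub_eq_average (fun s => ℓe (xr s) (ur s) s)
    (Nat.one_le_iff_ne_zero.mp hT) t
  have h_period : ∑ k ∈ range T, ℓe (xr (t + k)) (ur (t + k)) (t + k)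
      = ∑ k ∈ range T, ℓe (xr k) (ur k) k :=
    Periodic.sum_range_add (L := fun s => ℓe (xr s) (ur s) s) hper t
  rw [hVtil, hVtil, ← h_period]
  linarith [hdec t x hx]
end

section
/- Let ℓ : ℕ → ℝ be a bounded sequence (closed-loop economic stage cost), and suppose there exists a sequence V : ℕ → ℝ bounded below such that V(t+1) - V(t) ≤ -ℓ(t) + c for all t ∈ ℕ, where c ∈ ℝ is a constant (the optimal steady-state cost). Then the asymptotic average cost satisfies limsup_{K→∞} (1/K)∑_{t=0}^{K-1} ℓ(t) ≤ c. -/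
/-- Economic MPC: value-function decrease up to the steady-state cost bounds the average cost. -/
theorem stmt8 (ℓ V : ℕ → ℝ) (c M m : ℝ)
    (hbnd : ∀ t, |ℓ t| ≤ M)
    (hlb : ∀ t, m ≤ V t)
    (hdec : ∀ t, V (t+1) - V t ≤ -ℓ t + c) :
    Filter.limsup (fun K : ℕ => (1/(K:ℝ)) * ∑ t ∈ Finset.range K, ℓ t) Filter.atTop ≤ c := by
  -- Telescoping bound on partial sums
  have hsum : ∀ K : ℕ, ∑ t ∈ Finset.range K, ℓ t ≤ V 0 - V K + K * c := by
    intro K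
    induction K with
    | zero => simp
    | succ n ih =>
      rw [Finset.sum_range_succ]
      push_cast
      nlinarith [hdec n]
  have key : ∀ K : ℕ, 1 ≤ K → (1/(K:ℝ)) * ∑ t ∈ Finset.range K, ℓ t ≤ (V 0 - m) / K + c := by
    intro K h
    have hK : (0:ℝ) < K := by exact_mod_cast h
    calc (1/(K:ℝ)) * ∑ t ∈ Finset.range K, ℓ t
        ≤ (1/(K:ℝ)) * (V 0 - m + K * c) := by
          apply mul_le_mul_of_nonneg_left _ (by positivity)
          have := hsum K; have := hlb K; linarith
      _ = (V 0 - m) / K + c := by field_simp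
  have htend : Filter.Tendsto (fun K : ℕ => (V 0 - m) / (K:ℝ) + c) Filter.atTop (nhds c) := by
    have : Filter.Tendsto (fun K : ℕ => (V 0 - m) / (K:ℝ)) Filter.atTop (nhds 0) :=
      tendsto_const_nhds.div_atTop tendsto_natCast_atTop_atTop
    simpa using this.add tendsto_const_nhds
  have hcb : Filter.IsCoboundedUnder (· ≤ ·) Filter.atTop
      (fun K : ℕ => (1/(K:ℝ)) * ∑ t ∈ Finset.range K, ℓ t) := by
    apply Filter.IsBoundedUnder.isCoboundedUnder_le
    refine ⟨-(M+1), Filter.eventually_map.2 (Filter.Eventually.of_forall fun K => ?_)⟩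
    rcases Nat.eq_zero_or_pos K with h | h
    · simp only [h]; simp; linarith [abs_nonneg (ℓ 0), hbnd 0]
    · have hK : (0:ℝ) < K := by exact_mod_cast h
      have hs : (K:ℝ) * (-M) ≤ ∑ t ∈ Finset.range K, ℓ t := by
        have : ∑ t ∈ Finset.range K, (-M) ≤ ∑ t ∈ Finset.range K, ℓ t :=
          Finset.sum_le_sum fun t _ => neg_le_of_abs_le (hbnd t)
        simpa [mul_comm] using this
      have : -M ≤ (1/(K:ℝ)) * ∑ t ∈ Finset.range K, ℓ t := by
        rw [one_div, le_inv_mul_iff₀ hK]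
        nlinarith
      linarith
  have hle : Filter.limsup (fun K : ℕ => (1/(K:ℝ)) * ∑ t ∈ Finset.range K, ℓ t) Filter.atTop
      ≤ Filter.limsup (fun K : ℕ => (V 0 - m) / (K:ℝ) + c) Filter.atTop :=
    Filter.limsup_le_limsup
      (Filter.eventually_atTop.2 ⟨1, key⟩) hcb htend.isBoundedUnder_le
  calc Filter.limsup (fun K : ℕ => (1/(K:ℝ)) * ∑ t ∈ Finset.range K, ℓ t) Filter.atTop
      ≤ Filter.limsup (fun K : ℕ => (V 0 - m) / (K:ℝ) + c) Filter.atTop := hle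
    _ = c := htend.limsup_eq
end

section
/- Let T ∈ ℕ, T ≥ 1, and g : ℕ → ℝ a T-periodic sequence. Define S(t) := ∑_{k=0}^{T-2} ((T-1-k)/T)·g(t+k) for every t (with S(t) := 0 when T = 1). Then for all t ∈ ℕ: S(t+1) - S(t) = (1/T)∑_{k=0}^{T-1} g(t+k) - g(t) = (1/T)∑_{k=0}^{T-1} g(k) - g(t). -/
/-- Combinatorial identity for the shifted terminal cost correction term. -/
theorem stmt9 (T : ℕ) (hT : 1 ≤ T) (g : ℕ → ℝ) (hper : ∀ t, g (t + T) = g t)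
    (S : ℕ → ℝ)
    (hS : ∀ t, S t = ∑ k ∈ Finset.range (T-1), (((T:ℝ) - 1 - k)/T) * g (t+k)) :
    ∀ t, S (t+1) - S t = (1/(T:ℝ)) * (∑ k ∈ Finset.range T, g (t+k)) - g t ∧
         S (t+1) - S t = (1/(T:ℝ)) * (∑ k ∈ Finset.range T, g k) - g t := by
  obtain ⟨n, rfl⟩ : ∃ n, T = n + 1 := ⟨T - 1, (Nat.succ_pred_eq_of_pos hT).symm⟩
  have hT0 : ((n:ℝ)+1) ≠ 0 := by positivity
  have hshift : ∀ t, ∑ k ∈ Finset.range (n+1), g (t+k) = ∑ k ∈ Finset.range (n+1), g k := by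
    intro t
    induction t with
    | zero => simp
    | succ t ih =>
      rw [← ih]
      rw [Finset.sum_range_succ]
      conv_rhs => rw [Finset.sum_range_succ']
      have h1 : g (t + (n + 1)) = g (t + 0) := by rw [hper]; simp
      have h2 : ∀ k, t + 1 + k = t + (k + 1) := by intro k; omega
      simp only [h2, h1]
  have key : ∀ t, S (t+1) - S t = (1/((n:ℝ)+1)) * (∑ k ∈ Finset.range (n+1), g (t+k)) - g t := by
    intro t
    rw [hS, hS]
    simp only [Nat.add_sub_cancel]
    have e1 : (∑ k ∈ Finset.range (n+1), ((((n:ℝ)+1) - k)/((n:ℝ)+1)) * g (t+k))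
        = (∑ k ∈ Finset.range n, ((((n+1:ℕ):ℝ) - 1 - k)/((n+1:ℕ):ℝ)) * g (t+1+k)) + g t := by
      rw [Finset.sum_range_succ']
      congr 1
      · apply Finset.sum_congr rfl
        intro k _
        have h2 : t + (k + 1) = t + 1 + k := by omega
        rw [h2]
        push_cast
        ring_nf
      · push_cast
        field_simp
        simp
    have e2 : (∑ k ∈ Finset.range (n+1), (((n:ℝ) - k)/((n:ℝ)+1)) * g (t+k))
        = ∑ k ∈ Finset.range n, ((((n+1:ℕ):ℝ) - 1 - k)/((n+1:ℕ):ℝ)) * g (t+k) := by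
      rw [Finset.sum_range_succ]
      have hz : (((n:ℝ) - n)/((n:ℝ)+1)) * g (t+n) = 0 := by simp
      rw [hz, add_zero]
      apply Finset.sum_congr rfl
      intro k _
      push_cast
      ring_nf
    rw [← e2]
    have e1' : (∑ k ∈ Finset.range n, ((((n+1:ℕ):ℝ) - 1 - k)/((n+1:ℕ):ℝ)) * g (t+1+k))
        = (∑ k ∈ Finset.range (n+1), ((((n:ℝ)+1) - k)/((n:ℝ)+1)) * g (t+k)) - g t := by
      rw [e1]; ring
    rw [e1', Finset.mul_sum, sub_right_comm]
    congr 1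
    rw [← Finset.sum_sub_distrib]
    apply Finset.sum_congr rfl
    intro k _
    field_simp
    ring
  intro t
  have hcast : ((n+1:ℕ):ℝ) = (n:ℝ)+1 := by push_cast; ring
  refine ⟨by rw [key t, hcast], ?_⟩
  rw [key t, hshift t, hcast]
end
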